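/- Let f be a holomorphic self-map of the open unit disc 𝔻 that is not a conformal automorphism of 𝔻, and let K be a compact subset of 𝔻. Then there exists a constant 0 < k < 1 such that ρ(f(z), f(w)) ≤ k·ρ(z,w) for all z, w ∈ K. -/

import Mathlib

open Complex Set Filter Metric

/-- The open unit disc in the complex plane. -/
def unitDisc : Set ℂ := {z : ℂ | ‖z‖ < 1}

/-- Inverse hyperbolic tangent. -/
noncomputable def artanh (x : ℝ) : ℝ := (1 / 2) * Real.log ((1 + x) / (1 - x))

/-- The hyperbolic distance on the unit disc, induced by the Riemannian metric
`2|dz|/(1-|z|²)`. -/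
noncomputable def hdist (z w : ℂ) : ℝ :=
  2 * artanh (‖(z - w) / (1 - (starRingEnd ℂ) w * z)‖)

/-- Left compositions: `leftComp f n = f (n-1) ∘ ⋯ ∘ f 1 ∘ f 0`, so that `f k`
plays the role of the `(k+1)`-st map `f_{k+1}` of the sequence. -/
def leftComp (f : ℕ → ℂ → ℂ) : ℕ → ℂ → ℂ
  | 0 => id
  | n + 1 => f n ∘ leftComp f n

/-- Right compositions: `rightComp g n = g 0 ∘ g 1 ∘ ⋯ ∘ g (n-1)`, so that `g k`
plays the role of the `(k+1)`-st map `g_{k+1}` of the sequence. -/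
def rightComp (g : ℕ → ℂ → ℂ) : ℕ → ℂ → ℂ
  | 0 => id
  | n + 1 => rightComp g n ∘ g n

/-!
Write `[z, w] = (z - w) / (1 - w̄ z)`, so that `ρ(z, w) = 2 artanh |[z, w]|`. The hyperbolic
divided difference `[f z, f w] / [z, w]`, extended to the diagonal by the hyperbolic derivative
`f'(w) (1 - |w|²) / (1 - |f w|²)`, is continuous on `𝔻 × 𝔻` because holomorphic maps are
strictly differentiable. It is the slope at `0` of `f` conjugated by the Möbius maps moving `w`
and `f w` to `0`, so by the equality case of the Schwarz lemma it has modulus `< 1` when `f` is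
not an automorphism. Its maximum `k` on the compact set `K × K` is therefore `< 1`, and
`|[f z, f w]| ≤ k |[z, w]|` gives `ρ(f z, f w) ≤ k ρ(z, w)` because the Taylor coefficients of
`artanh` are nonnegative and odd-indexed, whence `artanh (k s) ≤ k artanh s`.
-/

section DSlope

variable {𝕜 E : Type*} [NontriviallyNormedField 𝕜] [NormedAddCommGroup E] [NormedSpace 𝕜 E]
  {f : 𝕜 → E}

theorem continuousAt_uncurry_dslope_of_ne {a b : 𝕜} (hab : a ≠ b) (ha : ContinuousAt f a)
    (hb : ContinuousAt f b) : ContinuousAt (fun p : 𝕜 × 𝕜 => dslope f p.1 p.2) (a, b) := by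
  have hslope : ContinuousAt (fun p : 𝕜 × 𝕜 => (p.2 - p.1)⁻¹ • (f p.2 - f p.1)) (a, b) :=
    ((continuousAt_snd.sub continuousAt_fst).inv₀ (sub_ne_zero.mpr hab.symm)).smul
      ((hb.comp continuousAt_snd).sub (ha.comp continuousAt_fst))
  refine hslope.congr ?_
  filter_upwards [(continuousAt_snd.sub continuousAt_fst).eventually_ne
    (sub_ne_zero.mpr hab.symm)] with p hp
  rw [dslope_of_ne _ (sub_ne_zero.mp hp), slope_def_module]

theorem continuousAt_uncurry_dslope_self {a : 𝕜} (hf : HasStrictDerivAt f (deriv f a) a)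
    (hf' : ContinuousAt (deriv f) a) :
    ContinuousAt (fun p : 𝕜 × 𝕜 => dslope f p.1 p.2) (a, a) := by
  set D : Set (𝕜 × 𝕜) := {p | p.1 = p.2}
  -- On `D` the map is `deriv f ∘ Prod.fst`; off `D` its distance to `deriv f a` is the
  -- strict-derivative remainder divided by `p.1 - p.2`.
  rw [← continuousWithinAt_univ, ← union_compl_self D, continuousWithinAt_union]
  constructor
  · refine (hf'.comp continuousAt_fst).continuousWithinAt.congr
      (fun p (hp : p.1 = p.2) => ?_) ?_
    · simp [← hp]
    · simp
  · have h := (hasDerivAtFilter_iff_isLittleO.mp hf).tendsto_inv_smul_nhds_zero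
    rw [ContinuousWithinAt, dslope_same, ← tendsto_sub_nhds_zero_iff]
    refine (h.mono_left nhdsWithin_le_nhds).congr' ?_
    filter_upwards [self_mem_nhdsWithin] with p (hp : p.1 ≠ p.2)
    have hp' : p.1 - p.2 ≠ 0 := sub_ne_zero.mpr hp
    rw [dslope_of_ne _ (Ne.symm hp), slope_def_module, smul_sub, inv_smul_smul₀ hp',
      ← neg_sub p.1, ← neg_sub (f p.1), inv_neg, neg_smul_neg]

end DSlope

theorem continuousOn_uncurry_dslope {E : Type*} [NormedAddCommGroup E] [NormedSpace ℂ E]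
    [CompleteSpace E] {f : ℂ → E} {s : Set ℂ} (hs : IsOpen s) (hf : DifferentiableOn ℂ f s) :
    ContinuousOn (fun p : ℂ × ℂ => dslope f p.1 p.2) (s ×ˢ s) := by
  rintro ⟨a, b⟩ ⟨ha, hb⟩
  refine ContinuousAt.continuousWithinAt ?_
  rcases eq_or_ne a b with rfl | hab
  · exact continuousAt_uncurry_dslope_self (hf.analyticAt (hs.mem_nhds ha)).hasStrictDerivAt
      (((hf.analyticOnNhd hs).deriv).continuousOn.continuousAt (hs.mem_nhds ha))
  · exact continuousAt_uncurry_dslope_of_ne hab (hf.continuousOn.continuousAt (hs.mem_nhds ha))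
      (hf.continuousOn.continuousAt (hs.mem_nhds hb))

theorem hasSum_artanh {x : ℝ} (hx : |x| < 1) :
    HasSum (fun n : ℕ => x ^ (2 * n + 1) / (2 * n + 1)) (artanh x) := by
  obtain ⟨hx₁, hx₂⟩ := abs_lt.mp hx
  have hterm : (fun n : ℕ => x ^ (2 * n + 1) / (2 * n + 1)) =
      fun n : ℕ => 1 / 2 * (2 * (1 / (2 * n + 1)) * x ^ (2 * n + 1)) := by
    funext n; ring
  rw [hterm, artanh, Real.log_div (by linarith) (by linarith)]
  exact (Real.hasSum_log_sub_log_of_abs_lt_one hx).mul_left (1 / 2)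

theorem artanh_le_mul_artanh {a k s : ℝ} (ha : 0 ≤ a) (has : a ≤ k * s) (hk₀ : 0 ≤ k)
    (hk₁ : k ≤ 1) (hs₀ : 0 ≤ s) (hs₁ : s < 1) : artanh a ≤ k * artanh s := by
  have hks : k * s ≤ s := mul_le_of_le_one_left hs₀ hk₁
  refine hasSum_le (fun n => ?_) (hasSum_artanh (by rw [abs_lt]; constructor <;> linarith))
    ((hasSum_artanh (by rwa [abs_of_nonneg hs₀])).mul_left k)
  rw [← mul_div_assoc]
  gcongr
  calc a ^ (2 * n + 1) ≤ (k * s) ^ (2 * n + 1) := by gcongr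
    _ = k ^ (2 * n + 1) * s ^ (2 * n + 1) := mul_pow k s _
    _ ≤ k * s ^ (2 * n + 1) := by gcongr; exact pow_le_of_le_one hk₀ hk₁ (by omega)

open ComplexConjugate

theorem unitDisc_eq_ball : unitDisc = ball (0 : ℂ) 1 := by
  ext z; simp [unitDisc]

noncomputable def mobius (a z : ℂ) : ℂ := (z - a) / (1 - conj a * z)

theorem hdist_eq (z w : ℂ) : hdist z w = 2 * artanh ‖mobius w z‖ := rfl

@[simp] theorem mobius_self (a : ℂ) : mobius a a = 0 := by simp [mobius]

@[simp] theorem mobius_neg_zero (a : ℂ) : mobius (-a) 0 = a := by simp [mobius]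

theorem one_sub_conj_mul_ne_zero {a z : ℂ} (ha : ‖a‖ < 1) (hz : ‖z‖ < 1) :
    1 - conj a * z ≠ 0 := by
  have h : ‖conj a * z‖ < 1 := by
    rw [norm_mul, Complex.norm_conj]
    exact mul_lt_one_of_nonneg_of_lt_one_left (norm_nonneg a) ha hz.le
  exact sub_ne_zero.mpr fun h' => by simp [← h'] at h

theorem normSq_one_sub_conj_mul_sub_normSq_sub (a z : ℂ) :
    normSq (1 - conj a * z) - normSq (z - a) = (1 - normSq a) * (1 - normSq z) := by
  apply Complex.ofReal_injective
  push_cast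
  simp only [← Complex.mul_conj, map_sub, map_mul, map_one, Complex.conj_conj]
  ring

theorem norm_mobius_lt_one {a z : ℂ} (ha : ‖a‖ < 1) (hz : ‖z‖ < 1) : ‖mobius a z‖ < 1 := by
  have hpos : 0 < (1 - normSq a) * (1 - normSq z) := by
    rw [normSq_eq_norm_sq, normSq_eq_norm_sq]
    exact mul_pos (by nlinarith [norm_nonneg a]) (by nlinarith [norm_nonneg z])
  have key := normSq_one_sub_conj_mul_sub_normSq_sub a z
  rw [mobius, norm_div, div_lt_one (norm_pos_iff.mpr (one_sub_conj_mul_ne_zero ha hz)),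
    ← sq_lt_sq₀ (norm_nonneg _) (norm_nonneg _), ← normSq_eq_norm_sq, ← normSq_eq_norm_sq]
  linarith

theorem mobius_neg_mobius {a z : ℂ} (ha : ‖a‖ < 1) (hz : ‖z‖ < 1) :
    mobius (-a) (mobius a z) = z := by
  have hD := one_sub_conj_mul_ne_zero ha hz
  have hA := one_sub_conj_mul_ne_zero ha ha
  have hnum : mobius a z + a = (z - a + a * (1 - conj a * z)) / (1 - conj a * z) := by
    rw [mobius, div_add' _ _ _ hD]
  have hden : 1 - conj (-a) * mobius a z = (1 - conj a * a) / (1 - conj a * z) := by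
    rw [mobius, map_neg, neg_mul, sub_neg_eq_add, ← mul_div_assoc, one_add_div hD]
    ring
  rw [mobius, sub_neg_eq_add, hnum, hden, div_div_div_cancel_right₀ hD, div_eq_iff hA]
  ring

theorem mapsTo_mobius {a : ℂ} (ha : ‖a‖ < 1) : MapsTo (mobius a) (ball 0 1) (ball 0 1) :=
  fun _ hz => mem_ball_zero_iff.mpr (norm_mobius_lt_one ha (mem_ball_zero_iff.mp hz))

theorem bijOn_mobius {a : ℂ} (ha : ‖a‖ < 1) : BijOn (mobius a) (ball 0 1) (ball 0 1) := by
  have ha' : ‖-a‖ < 1 := by rwa [norm_neg]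
  refine InvOn.bijOn ⟨fun _ hz => ?_, fun _ hz => ?_⟩ (mapsTo_mobius ha) (mapsTo_mobius ha')
  · exact mobius_neg_mobius ha (mem_ball_zero_iff.mp hz)
  · simpa using mobius_neg_mobius ha' (mem_ball_zero_iff.mp hz)

theorem hasDerivAt_mobius (a : ℂ) {z : ℂ} (hz : 1 - conj a * z ≠ 0) :
    HasDerivAt (mobius a) ((1 - conj a * a) / (1 - conj a * z) ^ 2) z := by
  have hnum : HasDerivAt (fun u : ℂ => u - a) 1 z := (hasDerivAt_id z).sub_const a
  have hden : HasDerivAt (fun u : ℂ => 1 - conj a * u) (-conj a) z := by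
    simpa using ((hasDerivAt_id z).const_mul (conj a)).const_sub 1
  exact (hnum.div hden hz).congr_deriv (by ring)

theorem differentiableOn_mobius {a : ℂ} (ha : ‖a‖ < 1) :
    DifferentiableOn ℂ (mobius a) (ball 0 1) := fun _ hz =>
  (hasDerivAt_mobius a (one_sub_conj_mul_ne_zero ha (mem_ball_zero_iff.mp hz))).differentiableAt
    |>.differentiableWithinAt

theorem bijOn_const_mul_ball {c : ℂ} (hc : ‖c‖ = 1) :
    BijOn (c * ·) (ball (0 : ℂ) 1) (ball 0 1) := by
  have hc₀ : c ≠ 0 := norm_ne_zero_iff.mp (by rw [hc]; exact one_ne_zero)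
  have hmaps : ∀ d : ℂ, ‖d‖ = 1 → MapsTo (d * ·) (ball (0 : ℂ) 1) (ball 0 1) :=
    fun d hd z hz => by simpa [norm_mul, hd] using hz
  refine InvOn.bijOn ⟨fun z _ => ?_, fun z _ => ?_⟩ (hmaps c hc) (hmaps c⁻¹ (by simp [hc]))
  · exact inv_mul_cancel_left₀ hc₀ z
  · exact mul_inv_cancel_left₀ hc₀ z

theorem norm_dslope_lt_one_of_not_bijOn {g : ℂ → ℂ} {z : ℂ}
    (hd : DifferentiableOn ℂ g (ball 0 1)) (hmaps : MapsTo g (ball 0 1) (ball 0 1))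
    (h₀ : g 0 = 0) (hg : ¬ BijOn g (ball 0 1) (ball 0 1)) (hz : z ∈ ball (0 : ℂ) 1) :
    ‖dslope g 0 z‖ < 1 := by
  have hmaps' : MapsTo g (ball 0 1) (closedBall (g 0) 1) := by
    rw [h₀]; exact hmaps.mono_right ball_subset_closedBall
  refine (norm_dslope_le_div_of_mapsTo_ball hd hmaps' hz).trans_eq (div_one 1) |>.lt_of_ne ?_
  intro heq
  have hlin := affine_of_mapsTo_ball_of_norm_dslope_eq_div hd hmaps' hz (by rw [heq, div_one])
  refine hg ((bijOn_const_mul_ball heq).congr fun u hu => ?_)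
  simp [hlin hu, h₀, mul_comm]

noncomputable def recenter (f : ℂ → ℂ) (w : ℂ) : ℂ → ℂ := mobius (f w) ∘ f ∘ mobius (-w)

noncomputable def hyperbolicDivDiff (f : ℂ → ℂ) (w z : ℂ) : ℂ :=
  dslope f w z * (1 - conj w * z) / (1 - conj (f w) * f z)

theorem mobius_apply_eq_hyperbolicDivDiff_mul (f : ℂ → ℂ) {w z : ℂ}
    (hwz : 1 - conj w * z ≠ 0) : mobius (f w) (f z) = hyperbolicDivDiff f w z * mobius w z := by
  rcases eq_or_ne z w with rfl | hne
  · simp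
  rw [hyperbolicDivDiff, dslope_of_ne _ hne, slope_def_field, mobius, mobius]
  have hwz' : 1 - z * conj w ≠ 0 := by rwa [mul_comm]
  field_simp [sub_ne_zero.mpr hne]

@[simp] theorem recenter_zero (f : ℂ → ℂ) (w : ℂ) : recenter f w 0 = 0 := by
  simp [recenter]

section SelfMap

variable {f : ℂ → ℂ} {w : ℂ}

theorem recenter_mobius (hw : w ∈ ball (0 : ℂ) 1) {z : ℂ} (hz : z ∈ ball (0 : ℂ) 1) :
    recenter f w (mobius w z) = mobius (f w) (f z) := by
  rw [recenter, Function.comp_apply, Function.comp_apply,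
    mobius_neg_mobius (mem_ball_zero_iff.mp hw) (mem_ball_zero_iff.mp hz)]

theorem mapsTo_recenter (hfmap : MapsTo f (ball 0 1) (ball 0 1)) (hw : w ∈ ball (0 : ℂ) 1) :
    MapsTo (recenter f w) (ball 0 1) (ball 0 1) :=
  (mapsTo_mobius (mem_ball_zero_iff.mp (hfmap hw))).comp
    (hfmap.comp (mapsTo_mobius (by simpa using hw)))

theorem differentiableOn_recenter (hf : DifferentiableOn ℂ f (ball 0 1))
    (hfmap : MapsTo f (ball 0 1) (ball 0 1)) (hw : w ∈ ball (0 : ℂ) 1) :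
    DifferentiableOn ℂ (recenter f w) (ball 0 1) :=
  (differentiableOn_mobius (mem_ball_zero_iff.mp (hfmap hw))).comp
    (hf.comp (differentiableOn_mobius (by simpa using hw)) (mapsTo_mobius (by simpa using hw)))
    (hfmap.comp (mapsTo_mobius (by simpa using hw)))

theorem not_bijOn_recenter (hfmap : MapsTo f (ball 0 1) (ball 0 1)) (hw : w ∈ ball (0 : ℂ) 1)
    (hnot : ¬ BijOn f (ball 0 1) (ball 0 1)) :
    ¬ BijOn (recenter f w) (ball 0 1) (ball 0 1) := fun hbij => by
  refine hnot (((bijOn_mobius (a := -f w) (by simpa using hfmap hw)).comp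
    (hbij.comp (bijOn_mobius (mem_ball_zero_iff.mp hw)))).congr fun z hz => ?_)
  simp [recenter_mobius hw hz, mobius_neg_mobius (mem_ball_zero_iff.mp (hfmap hw))
    (mem_ball_zero_iff.mp (hfmap hz))]

theorem hasDerivAt_recenter_zero (hf : DifferentiableAt ℂ f w)
    (hfmap : MapsTo f (ball 0 1) (ball 0 1)) (hw : w ∈ ball (0 : ℂ) 1) :
    HasDerivAt (recenter f w) (hyperbolicDivDiff f w w) 0 := by
  have hfw := one_sub_conj_mul_ne_zero (mem_ball_zero_iff.mp (hfmap hw))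
    (mem_ball_zero_iff.mp (hfmap hw))
  have h₁ : HasDerivAt (mobius (-w)) (1 - conj w * w) 0 := by
    simpa using hasDerivAt_mobius (-w) (z := 0) (by simp)
  have h₂ : HasDerivAt f (deriv f w) (mobius (-w) 0) := by simpa using hf.hasDerivAt
  have h₃ : HasDerivAt (mobius (f w)) (1 - conj (f w) * f w)⁻¹ ((f ∘ mobius (-w)) 0) := by
    convert hasDerivAt_mobius (f w) hfw using 1
    · field_simp
    · simp
  refine (h₃.comp 0 (h₂.comp 0 h₁)).congr_deriv ?_
  rw [hyperbolicDivDiff, dslope_same]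
  ring

theorem dslope_recenter_mobius (hf : DifferentiableOn ℂ f (ball 0 1))
    (hfmap : MapsTo f (ball 0 1) (ball 0 1)) (hw : w ∈ ball (0 : ℂ) 1) {z : ℂ}
    (hz : z ∈ ball (0 : ℂ) 1) :
    dslope (recenter f w) 0 (mobius w z) = hyperbolicDivDiff f w z := by
  rcases eq_or_ne z w with rfl | hne
  · rw [mobius_self, dslope_same, (hasDerivAt_recenter_zero
      (hf.differentiableAt (isOpen_ball.mem_nhds hz)) hfmap hz).deriv]
  have hden := one_sub_conj_mul_ne_zero (mem_ball_zero_iff.mp hw) (mem_ball_zero_iff.mp hz)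
  have hζ : mobius w z ≠ 0 := div_ne_zero (sub_ne_zero.mpr hne) hden
  rw [dslope_of_ne _ hζ, slope_def_field, recenter_zero, recenter_mobius hw hz,
    mobius_apply_eq_hyperbolicDivDiff_mul f hden, sub_zero, sub_zero, mul_div_cancel_right₀ _ hζ]

theorem norm_hyperbolicDivDiff_lt_one (hf : DifferentiableOn ℂ f (ball 0 1))
    (hfmap : MapsTo f (ball 0 1) (ball 0 1)) (hnot : ¬ BijOn f (ball 0 1) (ball 0 1))
    (hw : w ∈ ball (0 : ℂ) 1) {z : ℂ} (hz : z ∈ ball (0 : ℂ) 1) :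
    ‖hyperbolicDivDiff f w z‖ < 1 := by
  rw [← dslope_recenter_mobius hf hfmap hw hz]
  exact norm_dslope_lt_one_of_not_bijOn (differentiableOn_recenter hf hfmap hw)
    (mapsTo_recenter hfmap hw) (recenter_zero f w) (not_bijOn_recenter hfmap hw hnot)
    (mapsTo_mobius (mem_ball_zero_iff.mp hw) hz)

theorem continuousOn_uncurry_hyperbolicDivDiff (hf : DifferentiableOn ℂ f (ball 0 1))
    (hfmap : MapsTo f (ball 0 1) (ball 0 1)) :
    ContinuousOn (fun p : ℂ × ℂ => hyperbolicDivDiff f p.1 p.2) (ball 0 1 ×ˢ ball 0 1) := by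
  have hfc : ContinuousOn f (ball 0 1) := hf.continuousOn
  refine ((continuousOn_uncurry_dslope isOpen_ball hf).mul ?_).div ?_ fun p hp => ?_
  · fun_prop
  · exact continuousOn_const.sub ((continuous_conj.comp_continuousOn
      (hfc.comp continuousOn_fst fun p hp => hp.1)).mul
      (hfc.comp continuousOn_snd fun p hp => hp.2))
  · exact one_sub_conj_mul_ne_zero (mem_ball_zero_iff.mp (hfmap hp.1))
      (mem_ball_zero_iff.mp (hfmap hp.2))

end SelfMap

theorem hdist_le_mul_hdist {z w z' w' : ℂ} {k : ℝ} (hk₀ : 0 ≤ k) (hk₁ : k ≤ 1)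
    (hzw : ‖mobius w z‖ < 1) (h : ‖mobius w' z'‖ ≤ k * ‖mobius w z‖) :
    hdist z' w' ≤ k * hdist z w := by
  rw [hdist_eq, hdist_eq, mul_left_comm]
  gcongr
  exact artanh_le_mul_artanh (norm_nonneg _) h hk₀ hk₁ (norm_nonneg _) hzw

/-- **Strict Schwarz–Pick contraction on compact sets.** A holomorphic self-map of 𝔻
that is not a conformal automorphism of 𝔻 (i.e. not a holomorphic bijection of 𝔻 onto
itself) is a strict contraction of the hyperbolic metric on each compact subset of 𝔻. -/
theorem schwarz_pick_strict_contraction_on_compact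
    (f : ℂ → ℂ)
    (hf : DifferentiableOn ℂ f unitDisc) (hfmap : MapsTo f unitDisc unitDisc)
    (hnotaut : ¬ BijOn f unitDisc unitDisc)
    (K : Set ℂ) (hKcomp : IsCompact K) (hK : K ⊆ unitDisc) :
    ∃ k : ℝ, 0 < k ∧ k < 1 ∧
      ∀ z ∈ K, ∀ w ∈ K, hdist (f z) (f w) ≤ k * hdist z w := by
  rw [unitDisc_eq_ball] at hf hfmap hnotaut hK
  rcases K.eq_empty_or_nonempty with rfl | hKne
  · exact ⟨1 / 2, by norm_num, by norm_num, by simp⟩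
  obtain ⟨p, hp, hmax⟩ := (hKcomp.prod hKcomp).exists_isMaxOn (hKne.prod hKne)
    ((continuousOn_uncurry_hyperbolicDivDiff hf hfmap).norm.mono (prod_mono hK hK))
  have hp₁ : ‖hyperbolicDivDiff f p.1 p.2‖ < 1 :=
    norm_hyperbolicDivDiff_lt_one hf hfmap hnotaut (hK hp.1) (hK hp.2)
  set k := max (1 / 2) ‖hyperbolicDivDiff f p.1 p.2‖
  refine ⟨k, by positivity, max_lt (by norm_num) hp₁, fun z hz w hw => ?_⟩
  have hw₁ := mem_ball_zero_iff.mp (hK hw)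
  have hz₁ := mem_ball_zero_iff.mp (hK hz)
  refine hdist_le_mul_hdist (by positivity) (max_le (by norm_num) hp₁.le)
    (norm_mobius_lt_one hw₁ hz₁) ?_
  rw [mobius_apply_eq_hyperbolicDivDiff_mul f (one_sub_conj_mul_ne_zero hw₁ hz₁), norm_mul]
  gcongr
  exact (hmax (mk_mem_prod hw hz)).trans (le_max_right _ _)
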